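/- Let (g_t)_{t∈[0,1]} be a smooth isotopy in Symp(D) with g_0 = id, let f_t be the associated normalized Hamiltonian functions vanishing on ∂D, let R((g_t)) = ∫₀¹ (∫_D f_t dx dy) dt, and let φ̃ be the lift of the boundary isotopy with φ̃_0 = id. Then τ_λ(g₁) + 2·R((g_t)) = (1/4)·∫₀^{2π} (φ̃₁(θ) − θ) dθ. -/

import Mathlib

open MeasureTheory Filter Topology Set Function Real

noncomputable section

/-- The closed unit disk in `ℝ²`. -/
def disk : Set (ℝ × ℝ) := {p | p.1 ^ 2 + p.2 ^ 2 ≤ 1}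

/-- The boundary circle of the unit disk. -/
def bdry : Set (ℝ × ℝ) := {p | p.1 ^ 2 + p.2 ^ 2 = 1}

/-- Partial derivative in the `x`-direction. -/
def pdx (f : ℝ × ℝ → ℝ) (p : ℝ × ℝ) : ℝ := fderiv ℝ f p (1, 0)

/-- Partial derivative in the `y`-direction. -/
def pdy (f : ℝ × ℝ → ℝ) (p : ℝ × ℝ) : ℝ := fderiv ℝ f p (0, 1)

/-- The Jacobian determinant of a map `ℝ² → ℝ²`. -/
def jacDet (g : ℝ × ℝ → ℝ × ℝ) (p : ℝ × ℝ) : ℝ :=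
  pdx (fun q => (g q).1) p * pdy (fun q => (g q).2) p -
    pdy (fun q => (g q).1) p * pdx (fun q => (g q).2) p

/-- `g` represents an element of `Symp(D)`: a `C^∞` diffeomorphism of the closed
unit disk onto itself (smooth up to the boundary, i.e. the restriction of a
globally smooth map with globally smooth inverse on the disk) whose Jacobian
determinant is identically `1` on the disk. -/
def IsSymp (g : ℝ × ℝ → ℝ × ℝ) : Prop :=
  ContDiff ℝ (⊤ : ℕ∞) g ∧ MapsTo g disk disk ∧ (∀ p ∈ disk, jacDet g p = 1) ∧
    ∃ g' : ℝ × ℝ → ℝ × ℝ, ContDiff ℝ (⊤ : ℕ∞) g' ∧ MapsTo g' disk disk ∧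
      (∀ p ∈ disk, g' (g p) = p) ∧ (∀ p ∈ disk, g (g' p) = p)

/-- `g` represents an element of `G_o`: a symplectomorphism of the disk fixing the origin. -/
def IsSympO (g : ℝ × ℝ → ℝ × ℝ) : Prop :=
  IsSymp g ∧ g (0, 0) = (0, 0)

/-- `τ_λ(g) = ∫_D g*λ ∧ λ` for `λ = (x dy - y dx)/2`, written out in coordinates. -/
def tauL (g : ℝ × ℝ → ℝ × ℝ) : ℝ :=
  (1 / 4) * ∫ p in disk,
    (p.1 * ((g p).1 * pdx (fun q => (g q).2) p - (g p).2 * pdx (fun q => (g q).1) p) +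
     p.2 * ((g p).1 * pdy (fun q => (g q).2) p - (g p).2 * pdy (fun q => (g q).1) p))

/-- `σ(g) = ∫_γ (g*λ - λ)` along the radial path `γ(t) = (t,0)`, in coordinates. -/
def sigmaQ (g : ℝ × ℝ → ℝ × ℝ) : ℝ :=
  (1 / 2) * ∫ t in (0:ℝ)..1,
    ((g (t, 0)).1 * pdx (fun q => (g q).2) (t, 0) -
      (g (t, 0)).2 * pdx (fun q => (g q).1) (t, 0))

/-- `G` is a smooth isotopy in `Symp(D)` starting at the identity. -/
def IsIsotopy (G : ℝ → ℝ × ℝ → ℝ × ℝ) : Prop :=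
  ContDiff ℝ (⊤ : ℕ∞) (fun q : ℝ × (ℝ × ℝ) => G q.1 q.2) ∧
    (∀ t ∈ Icc (0:ℝ) 1, IsSymp (G t)) ∧ (∀ p ∈ disk, G 0 p = p)

/-- `f` is a family of Hamiltonian functions for the isotopy `G`, i.e.
`i_{X_t} ω = d f_t` where `X_t = (∂g_t/∂t) ∘ g_t⁻¹`; since `g_t` maps the disk
onto itself this is expressed at the points `G t p`, `p ∈ D`. -/
def IsHam (G : ℝ → ℝ × ℝ → ℝ × ℝ) (f : ℝ → ℝ × ℝ → ℝ) : Prop :=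
  ContDiff ℝ (⊤ : ℕ∞) (fun q : ℝ × (ℝ × ℝ) => f q.1 q.2) ∧
    ∀ t ∈ Icc (0:ℝ) 1, ∀ p ∈ disk,
      pdx (f t) (G t p) = -(deriv (fun s => G s p) t).2 ∧
      pdy (f t) (G t p) = (deriv (fun s => G s p) t).1

/-- `φ` is the lift of the boundary isotopy of `G`, with `φ 0 = id`. -/
def IsBoundaryLift (G : ℝ → ℝ × ℝ → ℝ × ℝ) (φ : ℝ → ℝ → ℝ) : Prop :=
  ContDiff ℝ (⊤ : ℕ∞) (fun q : ℝ × ℝ => φ q.1 q.2) ∧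
    (∀ t ∈ Icc (0:ℝ) 1, StrictMono (φ t) ∧ ∀ θ : ℝ, φ t (θ + 2 * π) = φ t θ + 2 * π) ∧
    (∀ θ : ℝ, φ 0 θ = θ) ∧
    (∀ t ∈ Icc (0:ℝ) 1, ∀ θ : ℝ,
      G t (Real.cos θ, Real.sin θ) = (Real.cos (φ t θ), Real.sin (φ t θ)))


variable {Fsp : Type*} [NormedAddCommGroup Fsp] [NormedSpace ℝ Fsp]
variable {E₁ : Type*} [NormedAddCommGroup E₁] [NormedSpace ℝ E₁]

lemma fderiv_slice_right {F : ℝ × E₁ → Fsp} (hF : Differentiable ℝ F) (t : ℝ)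
    (p w : E₁) :
    fderiv ℝ (fun q => F (t, q)) p w = fderiv ℝ F (t, p) (0, w) := by
  have h1 : HasFDerivAt (fun q : E₁ => (t, q))
      (ContinuousLinearMap.inr ℝ ℝ E₁) p := hasFDerivAt_prodMk_right t p
  have h2 := ((hF (t, p)).hasFDerivAt.comp p h1).fderiv
  have h3 : (fun q => F (t, q)) = F ∘ Prod.mk t := rfl
  rw [h3, h2]; rfl

lemma hasDerivAt_slice_left {F : ℝ × E₁ → Fsp} (hF : Differentiable ℝ F) (t : ℝ)
    (p : E₁) :
    HasDerivAt (fun s => F (s, p)) (fderiv ℝ F (t, p) (1, 0)) t := by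
  have h1 : HasFDerivAt (fun s : ℝ => (s, p))
      (ContinuousLinearMap.inl ℝ ℝ E₁) t := hasFDerivAt_prodMk_left t p
  have h2 := ((hF (t, p)).hasFDerivAt.comp t h1).hasDerivAt
  simpa [Function.comp_def] using h2

lemma deriv_slice_left {F : ℝ × E₁ → Fsp} (hF : Differentiable ℝ F) (t : ℝ)
    (p : E₁) :
    deriv (fun s => F (s, p)) t = fderiv ℝ F (t, p) (1, 0) :=
  (hasDerivAt_slice_left hF t p).deriv

lemma contDiff_fderiv_apply {E : Type*} [NormedAddCommGroup E] [NormedSpace ℝ E]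
    {F : E → Fsp} (hF : ContDiff ℝ (⊤ : ℕ∞) F) (v : E) :
    ContDiff ℝ (⊤ : ℕ∞) fun q => fderiv ℝ F q v :=
  (hF.fderiv_right (by simp)).clm_apply contDiff_const

lemma fderiv_fderiv_symm {E : Type*} [NormedAddCommGroup E] [NormedSpace ℝ E]
    {F : E → Fsp} (hF : ContDiff ℝ (⊤ : ℕ∞) F) (q v w : E) :
    fderiv ℝ (fun x => fderiv ℝ F x v) q w = fderiv ℝ (fun x => fderiv ℝ F x w) q v := by
  have hsymm : IsSymmSndFDerivAt ℝ F q := hF.contDiffAt.isSymmSndFDerivAt (by rw [minSmoothness_of_isRCLikeNormedField]; exact WithTop.coe_le_coe.mpr le_top)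
  have hΦ : Differentiable ℝ (fderiv ℝ F) := (hF.fderiv_right (m := (⊤ : ℕ∞)) (by simp)).differentiable (by simp)
  have key : ∀ a b : E,
      fderiv ℝ (fun x => fderiv ℝ F x a) q b = fderiv ℝ (fderiv ℝ F) q b a := by
    intro a b
    have h4 := ((ContinuousLinearMap.apply ℝ Fsp a).hasFDerivAt.comp q
      (hΦ q).hasFDerivAt).fderiv
    have h5 : (fun x => fderiv ℝ F x a) = ⇑(ContinuousLinearMap.apply ℝ Fsp a) ∘ fderiv ℝ F := rfl
    rw [h5, h4]; rfl
  rw [key v w, key w v]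
  exact hsymm w v



lemma measurableSet_disk : MeasurableSet disk :=
  (isClosed_Iic.preimage (by continuity : Continuous fun p : ℝ × ℝ => p.1 ^ 2 + p.2 ^ 2)).measurableSet

lemma disk_integral_polar (f : ℝ × ℝ → ℝ) (hf : Continuous f) :
    ∫ p in disk, f p =
      ∫ θ in Ioo (-π) π, ∫ r in Ioc (0:ℝ) 1, r * f (r * Real.cos θ, r * Real.sin θ) := by
  have hpc : Continuous fun q : ℝ × ℝ => q.1 * f (q.1 * Real.cos q.2, q.1 * Real.sin q.2) := by
    fun_prop
  have hInt : IntegrableOn (fun q : ℝ × ℝ => q.1 * f (q.1 * Real.cos q.2, q.1 * Real.sin q.2))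
      (Ioc (0:ℝ) 1 ×ˢ Ioo (-π) π) volume :=
    (hpc.continuousOn.integrableOn_compact (isCompact_Icc.prod isCompact_Icc)).mono_set
      (prod_mono Ioc_subset_Icc_self Ioo_subset_Icc_self)
  have hsub : Ioc (0:ℝ) 1 ×ˢ Ioo (-π) π ⊆ polarCoord.target := by
    rw [polarCoord_target]
    exact prod_mono (fun r hr => hr.1) subset_rfl
  calc ∫ p in disk, f p = ∫ p, disk.indicator f p := (integral_indicator measurableSet_disk).symm
    _ = ∫ q in polarCoord.target, q.1 • disk.indicator f (polarCoord.symm q) :=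
        (integral_comp_polarCoord_symm _).symm
    _ = ∫ q in polarCoord.target, (Ioc (0:ℝ) 1 ×ˢ Ioo (-π) π).indicator
          (fun q : ℝ × ℝ => q.1 * f (q.1 * Real.cos q.2, q.1 * Real.sin q.2)) q := by
        apply setIntegral_congr_fun (polarCoord.open_target.measurableSet)
        intro q hq
        rw [polarCoord_target] at hq
        have hq1 : 0 < q.1 := hq.1
        have hr2 : (q.1 * Real.cos q.2) ^ 2 + (q.1 * Real.sin q.2) ^ 2 = q.1 ^ 2 := by
          rw [mul_pow, mul_pow, ← mul_add, Real.cos_sq_add_sin_sq, mul_one]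
        have hmem : polarCoord.symm q ∈ disk ↔ q.1 ≤ 1 := by
          simp only [disk, polarCoord_symm_apply, mem_setOf_eq, hr2]
          constructor
          · intro h; nlinarith
          · intro h; nlinarith
        show q.1 • disk.indicator f (polarCoord.symm q) = _
        by_cases h : q.1 ≤ 1
        · rw [indicator_of_mem (hmem.mpr h), indicator_of_mem (by exact ⟨⟨hq1, h⟩, hq.2⟩),
            smul_eq_mul, polarCoord_symm_apply]
        · rw [indicator_of_notMem (fun hm => h (hmem.mp hm)),
            indicator_of_notMem (fun hm : q ∈ _ => h hm.1.2), smul_eq_mul, mul_zero]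
    _ = ∫ q in polarCoord.target ∩ (Ioc (0:ℝ) 1 ×ˢ Ioo (-π) π),
          (fun q : ℝ × ℝ => q.1 * f (q.1 * Real.cos q.2, q.1 * Real.sin q.2)) q :=
        setIntegral_indicator (measurableSet_Ioc.prod measurableSet_Ioo)
    _ = ∫ q in Ioc (0:ℝ) 1 ×ˢ Ioo (-π) π,
          (fun q : ℝ × ℝ => q.1 * f (q.1 * Real.cos q.2, q.1 * Real.sin q.2)) q := by
        rw [inter_eq_self_of_subset_right hsub]
    _ = ∫ r in Ioc (0:ℝ) 1, ∫ θ in Ioo (-π) π, r * f (r * Real.cos θ, r * Real.sin θ) := by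
        rw [Measure.volume_eq_prod] at hInt ⊢
        exact setIntegral_prod _ hInt
    _ = ∫ θ in Ioo (-π) π, ∫ r in Ioc (0:ℝ) 1, r * f (r * Real.cos θ, r * Real.sin θ) := by
        apply integral_integral_swap
        rw [Measure.prod_restrict]
        rw [Measure.volume_eq_prod] at hInt
        exact hInt

lemma continuous_pdx {H : ℝ × ℝ → ℝ} (hH : ContDiff ℝ (⊤ : ℕ∞) H) : Continuous (pdx H) :=
  (contDiff_fderiv_apply hH ((1:ℝ), (0:ℝ))).continuous

lemma continuous_pdy {H : ℝ × ℝ → ℝ} (hH : ContDiff ℝ (⊤ : ℕ∞) H) : Continuous (pdy H) :=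
  (contDiff_fderiv_apply hH ((0:ℝ), (1:ℝ))).continuous

lemma hasDerivAt_radial (H : ℝ × ℝ → ℝ) (hH : ContDiff ℝ (⊤ : ℕ∞) H) (c s r : ℝ) :
    HasDerivAt (fun ρ => H (ρ * c, ρ * s))
      (c * pdx H (r * c, r * s) + s * pdy H (r * c, r * s)) r := by
  have hpath : HasDerivAt (fun ρ : ℝ => ((ρ * c, ρ * s) : ℝ × ℝ)) ((c, s) : ℝ × ℝ) r := by
    simpa using HasDerivAt.prodMk ((hasDerivAt_id r).mul_const c) ((hasDerivAt_id r).mul_const s)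
  have hH' := (hH.differentiable (by simp) (r * c, r * s)).hasFDerivAt
  have h := hH'.comp_hasDerivAt r hpath
  have hv : ((c, s) : ℝ × ℝ) = c • ((1:ℝ), (0:ℝ)) + s • ((0:ℝ), (1:ℝ)) := by
    simp [Prod.ext_iff]
  have h2 : fderiv ℝ H (r * c, r * s) ((c, s) : ℝ × ℝ) =
      c * pdx H (r * c, r * s) + s * pdy H (r * c, r * s) := by
    rw [hv, map_add, ContinuousLinearMap.map_smul, ContinuousLinearMap.map_smul]
    simp [pdx, pdy, smul_eq_mul]
  rw [h2] at h
  exact h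

lemma ibp_radial (H : ℝ × ℝ → ℝ) (hH : ContDiff ℝ (⊤ : ℕ∞) H) (θ : ℝ) :
    ∫ r in Ioc (0:ℝ) 1, r * ((r * Real.cos θ) * pdx H (r * Real.cos θ, r * Real.sin θ) +
        (r * Real.sin θ) * pdy H (r * Real.cos θ, r * Real.sin θ)) =
      H (Real.cos θ, Real.sin θ) -
        ∫ r in Ioc (0:ℝ) 1, 2 * r * H (r * Real.cos θ, r * Real.sin θ) := by
  set c := Real.cos θ; set s := Real.sin θ
  set k' : ℝ → ℝ := fun r => c * pdx H (r * c, r * s) + s * pdy H (r * c, r * s) with hk'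
  have hk'c : Continuous k' := by
    have h1 := continuous_pdx hH
    have h2 := continuous_pdy hH
    fun_prop
  have hHc : Continuous fun r : ℝ => H (r * c, r * s) := by
    have := hH.continuous; fun_prop
  have hderiv : ∀ r ∈ uIcc (0:ℝ) 1,
      HasDerivAt (fun r : ℝ => r ^ 2 * H (r * c, r * s))
        (2 * r * H (r * c, r * s) + r ^ 2 * k' r) r := by
    intro r _
    have h1 : HasDerivAt (fun r : ℝ => r ^ 2) (2 * r) r := by
      simpa using hasDerivAt_pow 2 r
    exact h1.mul (hasDerivAt_radial H hH c s r)
  have hc2 : Continuous fun r : ℝ => 2 * r * H (r * c, r * s) :=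
    (continuous_const.mul continuous_id).mul hHc
  have hc3 : Continuous fun r : ℝ => r ^ 2 * k' r := (continuous_pow 2).mul hk'c
  have hint : IntervalIntegrable
      (fun r : ℝ => 2 * r * H (r * c, r * s) + r ^ 2 * k' r) volume 0 1 :=
    ((hc2.add hc3).intervalIntegrable 0 1)
  have hFTC := intervalIntegral.integral_eq_sub_of_hasDerivAt hderiv hint
  simp only [one_pow, ne_eq, OfNat.ofNat_ne_zero, not_false_eq_true, zero_pow, zero_mul,
    one_mul, sub_zero, mul_one] at hFTC
  have hadd : ∫ r in (0:ℝ)..1, (2 * r * H (r * c, r * s) + r ^ 2 * k' r) =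
      (∫ r in (0:ℝ)..1, 2 * r * H (r * c, r * s)) + ∫ r in (0:ℝ)..1, r ^ 2 * k' r :=
    intervalIntegral.integral_add (hc2.intervalIntegrable 0 1) (hc3.intervalIntegrable 0 1)
  have heq : ∀ r : ℝ, r * ((r * c) * pdx H (r * c, r * s) + (r * s) * pdy H (r * c, r * s)) =
      r ^ 2 * k' r := by intro r; rw [hk']; ring
  rw [show (∫ r in Ioc (0:ℝ) 1, r * ((r * c) * pdx H (r * c, r * s) +
      (r * s) * pdy H (r * c, r * s))) = ∫ r in Ioc (0:ℝ) 1, r ^ 2 * k' r from by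
    simp_rw [heq]]
  rw [← intervalIntegral.integral_of_le (by norm_num : (0:ℝ) ≤ 1),
      ← intervalIntegral.integral_of_le (by norm_num : (0:ℝ) ≤ 1)]
  linarith [hFTC, hadd]

lemma periodic_circle (H : ℝ × ℝ → ℝ) : Function.Periodic
    (fun θ : ℝ => H (Real.cos θ, Real.sin θ)) (2 * π) := by
  intro θ; simp [Real.cos_add_two_pi, Real.sin_add_two_pi]

lemma circle_integral_shift (H : ℝ × ℝ → ℝ) :
    ∫ θ in Ioo (-π) π, H (Real.cos θ, Real.sin θ) =
      ∫ θ in (0:ℝ)..(2 * π), H (Real.cos θ, Real.sin θ) := by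
  rw [← integral_Ioc_eq_integral_Ioo,
    ← intervalIntegral.integral_of_le (by linarith [Real.pi_pos] : -π ≤ π)]
  have h := (periodic_circle H).intervalIntegral_add_eq (-π) 0
  rw [show -π + 2 * π = π by ring, show (0:ℝ) + 2 * π = 2 * π by ring] at h
  exact h

lemma radial_div (H : ℝ × ℝ → ℝ) (hH : ContDiff ℝ (⊤ : ℕ∞) H) :
    ∫ p in disk, (p.1 * pdx H p + p.2 * pdy H p) =
      (∫ θ in (0:ℝ)..(2 * π), H (Real.cos θ, Real.sin θ)) - 2 * ∫ p in disk, H p := by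
  have hfc : Continuous fun p : ℝ × ℝ => p.1 * pdx H p + p.2 * pdy H p := by
    have h1 := continuous_pdx hH
    have h2 := continuous_pdy hH
    fun_prop
  rw [disk_integral_polar _ hfc]
  have hB : ∀ θ : ℝ, (∫ r in Ioc (0:ℝ) 1, r *
      ((r * Real.cos θ) * pdx H (r * Real.cos θ, r * Real.sin θ) +
        (r * Real.sin θ) * pdy H (r * Real.cos θ, r * Real.sin θ))) =
      H (Real.cos θ, Real.sin θ) -
        ∫ r in Ioc (0:ℝ) 1, 2 * r * H (r * Real.cos θ, r * Real.sin θ) :=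
    fun θ => ibp_radial H hH θ
  rw [setIntegral_congr_fun measurableSet_Ioo (fun θ _ => hB θ)]
  have hHc := hH.continuous
  have hA : IntegrableOn (fun θ : ℝ => H (Real.cos θ, Real.sin θ)) (Ioo (-π) π) := by
    have hc : Continuous fun θ : ℝ => H (Real.cos θ, Real.sin θ) := by fun_prop
    exact (hc.continuousOn.integrableOn_compact isCompact_Icc).mono_set Ioo_subset_Icc_self
  have hprodInt : Integrable (uncurry fun (θ r : ℝ) => 2 * r * H (r * Real.cos θ, r * Real.sin θ))
      ((volume.restrict (Ioo (-π) π)).prod (volume.restrict (Ioc (0:ℝ) 1))) := by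
    rw [Measure.prod_restrict]
    have hc : Continuous fun q : ℝ × ℝ => 2 * q.2 * H (q.2 * Real.cos q.1, q.2 * Real.sin q.1) :=
      by fun_prop
    exact (hc.continuousOn.integrableOn_compact (isCompact_Icc.prod isCompact_Icc)).mono_set
      (prod_mono Ioo_subset_Icc_self Ioc_subset_Icc_self)
  have hBint : IntegrableOn
      (fun θ : ℝ => ∫ r in Ioc (0:ℝ) 1, 2 * r * H (r * Real.cos θ, r * Real.sin θ))
      (Ioo (-π) π) := hprodInt.integral_prod_left
  rw [integral_sub hA hBint]
  have h2H : ∫ θ in Ioo (-π) π, ∫ r in Ioc (0:ℝ) 1,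
      2 * r * H (r * Real.cos θ, r * Real.sin θ) = 2 * ∫ p in disk, H p := by
    have h0 := disk_integral_polar (fun p => 2 * H p) (by fun_prop)
    simp only [integral_const_mul] at h0
    rw [show (∫ θ in Ioo (-π) π, ∫ r in Ioc (0:ℝ) 1,
        2 * r * H (r * Real.cos θ, r * Real.sin θ)) =
        ∫ θ in Ioo (-π) π, ∫ r in Ioc (0:ℝ) 1,
          r * (2 * H (r * Real.cos θ, r * Real.sin θ)) from by
      congr 1; funext θ; congr 1; funext r; ring]
    exact h0.symm
  rw [h2H, circle_integral_shift]

lemma clm_det_eq (L : ℝ × ℝ →L[ℝ] ℝ × ℝ) :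
    L.det = (L (1, 0)).1 * (L (0, 1)).2 - (L (0, 1)).1 * (L (1, 0)).2 := by
  have h := LinearMap.det_toMatrix (Module.Basis.finTwoProd ℝ) (L : ℝ × ℝ →ₗ[ℝ] ℝ × ℝ)
  rw [ContinuousLinearMap.det, ← h, Matrix.det_fin_two]
  simp [LinearMap.toMatrix_apply, Module.Basis.finTwoProd_zero, Module.Basis.finTwoProd_one,
    Module.Basis.coe_finTwoProd_repr]

section helpers
variable {E : Type*} [NormedAddCommGroup E] [NormedSpace ℝ E]

lemma fderiv_mul_apply' {a b : E → ℝ} {q : E} (ha : DifferentiableAt ℝ a q)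
    (hb : DifferentiableAt ℝ b q) (w : E) :
    fderiv ℝ (fun x => a x * b x) q w = a q * fderiv ℝ b q w + b q * fderiv ℝ a q w := by
  rw [fderiv_fun_mul ha hb]
  simp [smul_eq_mul]

lemma fderiv_add_apply' {a b : E → ℝ} {q : E} (ha : DifferentiableAt ℝ a q)
    (hb : DifferentiableAt ℝ b q) (w : E) :
    fderiv ℝ (fun x => a x + b x) q w = fderiv ℝ a q w + fderiv ℝ b q w := by
  rw [fderiv_fun_add ha hb]; simp

lemma fderiv_sub_apply' {a b : E → ℝ} {q : E} (ha : DifferentiableAt ℝ a q)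
    (hb : DifferentiableAt ℝ b q) (w : E) :
    fderiv ℝ (fun x => a x - b x) q w = fderiv ℝ a q w - fderiv ℝ b q w := by
  rw [fderiv_fun_sub ha hb]; simp

lemma fderiv_const_mul_apply' {a : E → ℝ} {q : E} (ha : DifferentiableAt ℝ a q) (c : ℝ) (w : E) :
    fderiv ℝ (fun x => c * a x) q w = c * fderiv ℝ a q w := by
  rw [fderiv_const_mul ha c]; simp

end helpers

lemma fderiv_coord_x (q w : ℝ × (ℝ × ℝ)) :
    fderiv ℝ (fun q : ℝ × (ℝ × ℝ) => q.2.1) q w = w.2.1 := by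
  have h : HasFDerivAt (fun q : ℝ × (ℝ × ℝ) => q.2.1)
      ((ContinuousLinearMap.fst ℝ ℝ ℝ).comp (ContinuousLinearMap.snd ℝ ℝ (ℝ × ℝ))) q :=
    ((ContinuousLinearMap.fst ℝ ℝ ℝ).comp (ContinuousLinearMap.snd ℝ ℝ (ℝ × ℝ))).hasFDerivAt
  rw [h.fderiv]; rfl

lemma fderiv_coord_y (q w : ℝ × (ℝ × ℝ)) :
    fderiv ℝ (fun q : ℝ × (ℝ × ℝ) => q.2.2) q w = w.2.2 := by
  have h : HasFDerivAt (fun q : ℝ × (ℝ × ℝ) => q.2.2)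
      ((ContinuousLinearMap.snd ℝ ℝ ℝ).comp (ContinuousLinearMap.snd ℝ ℝ (ℝ × ℝ))) q :=
    ((ContinuousLinearMap.snd ℝ ℝ ℝ).comp (ContinuousLinearMap.snd ℝ ℝ (ℝ × ℝ))).hasFDerivAt
  rw [h.fderiv]; rfl

def EV1 : ℝ × (ℝ × ℝ) := (1, (0, 0))
def EVx : ℝ × (ℝ × ℝ) := (0, (1, 0))
def EVy : ℝ × (ℝ × ℝ) := (0, (0, 1))

section isotopy

variable (G : ℝ → ℝ × ℝ → ℝ × ℝ) (f : ℝ → ℝ × ℝ → ℝ)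

def JJ : ℝ × (ℝ × ℝ) → ℝ × ℝ := fun q => G q.1 q.2
def uu : ℝ × (ℝ × ℝ) → ℝ := fun q => (G q.1 q.2).1
def vv : ℝ × (ℝ × ℝ) → ℝ := fun q => (G q.1 q.2).2
def ux : ℝ × (ℝ × ℝ) → ℝ := fun q => fderiv ℝ (uu G) q EVx
def uy : ℝ × (ℝ × ℝ) → ℝ := fun q => fderiv ℝ (uu G) q EVy
def ut : ℝ × (ℝ × ℝ) → ℝ := fun q => fderiv ℝ (uu G) q EV1
def vx : ℝ × (ℝ × ℝ) → ℝ := fun q => fderiv ℝ (vv G) q EVx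
def vy : ℝ × (ℝ × ℝ) → ℝ := fun q => fderiv ℝ (vv G) q EVy
def vt : ℝ × (ℝ × ℝ) → ℝ := fun q => fderiv ℝ (vv G) q EV1
def Itg : ℝ × (ℝ × ℝ) → ℝ := fun q =>
  q.2.1 * (uu G q * vx G q - vv G q * ux G q) + q.2.2 * (uu G q * vy G q - vv G q * uy G q)
def HH : ℝ × (ℝ × ℝ) → ℝ := fun q =>
  (1 / 2) * (uu G q * vt G q - vv G q * ut G q) + f q.1 (G q.1 q.2)

variable (hGsm : ContDiff ℝ (⊤ : ℕ∞) fun q : ℝ × (ℝ × ℝ) => G q.1 q.2)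
variable (hfsm : ContDiff ℝ (⊤ : ℕ∞) fun q : ℝ × (ℝ × ℝ) => f q.1 q.2)

include hGsm

lemma uu_smooth : ContDiff ℝ (⊤ : ℕ∞) (uu G) := contDiff_fst.comp hGsm
lemma vv_smooth : ContDiff ℝ (⊤ : ℕ∞) (vv G) := contDiff_snd.comp hGsm
lemma ux_smooth : ContDiff ℝ (⊤ : ℕ∞) (ux G) := contDiff_fderiv_apply (uu_smooth G hGsm) EVx
lemma uy_smooth : ContDiff ℝ (⊤ : ℕ∞) (uy G) := contDiff_fderiv_apply (uu_smooth G hGsm) EVy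
lemma ut_smooth : ContDiff ℝ (⊤ : ℕ∞) (ut G) := contDiff_fderiv_apply (uu_smooth G hGsm) EV1
lemma vx_smooth : ContDiff ℝ (⊤ : ℕ∞) (vx G) := contDiff_fderiv_apply (vv_smooth G hGsm) EVx
lemma vy_smooth : ContDiff ℝ (⊤ : ℕ∞) (vy G) := contDiff_fderiv_apply (vv_smooth G hGsm) EVy
lemma vt_smooth : ContDiff ℝ (⊤ : ℕ∞) (vt G) := contDiff_fderiv_apply (vv_smooth G hGsm) EV1

lemma Itg_smooth : ContDiff ℝ (⊤ : ℕ∞) (Itg G) := by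
  have h1 := uu_smooth G hGsm; have h2 := vv_smooth G hGsm
  have h3 := ux_smooth G hGsm; have h4 := uy_smooth G hGsm
  have h5 := vx_smooth G hGsm; have h6 := vy_smooth G hGsm
  unfold Itg
  exact ((contDiff_fst.comp contDiff_snd).mul ((h1.mul h5).sub (h2.mul h3))).add
    ((contDiff_snd.comp contDiff_snd).mul ((h1.mul h6).sub (h2.mul h4)))

include hfsm

lemma HH_smooth : ContDiff ℝ (⊤ : ℕ∞) (HH G f) := by
  have h1 := uu_smooth G hGsm; have h2 := vv_smooth G hGsm
  have h3 := ut_smooth G hGsm; have h4 := vt_smooth G hGsm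
  have hcomp : ContDiff ℝ (⊤ : ℕ∞) fun q : ℝ × (ℝ × ℝ) => f q.1 (G q.1 q.2) :=
    hfsm.comp (contDiff_fst.prodMk hGsm)
  unfold HH
  exact (contDiff_const.mul ((h1.mul h4).sub (h2.mul h3))).add hcomp

end isotopy

section isotopy2

variable {G : ℝ → ℝ × ℝ → ℝ × ℝ} {f : ℝ → ℝ × ℝ → ℝ}
variable (hGsm : ContDiff ℝ (⊤ : ℕ∞) fun q : ℝ × (ℝ × ℝ) => G q.1 q.2)

include hGsm

lemma JJ_diff : Differentiable ℝ (JJ G) := hGsm.differentiable (by simp)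

lemma fderiv_JJ_fst (q : ℝ × (ℝ × ℝ)) (w : ℝ × (ℝ × ℝ)) :
    (fderiv ℝ (JJ G) q w).1 = fderiv ℝ (uu G) q w := by
  have h := ((JJ_diff hGsm q).hasFDerivAt).fst
  have h2 : fderiv ℝ (uu G) q =
      (ContinuousLinearMap.fst ℝ ℝ ℝ).comp (fderiv ℝ (JJ G) q) := h.fderiv
  rw [h2]; rfl

lemma fderiv_JJ_snd (q : ℝ × (ℝ × ℝ)) (w : ℝ × (ℝ × ℝ)) :
    (fderiv ℝ (JJ G) q w).2 = fderiv ℝ (vv G) q w := by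
  have h := ((JJ_diff hGsm q).hasFDerivAt).snd
  have h2 : fderiv ℝ (vv G) q =
      (ContinuousLinearMap.snd ℝ ℝ ℝ).comp (fderiv ℝ (JJ G) q) := h.fderiv
  rw [h2]; rfl

lemma deriv_G_slice (t : ℝ) (p : ℝ × ℝ) :
    deriv (fun s => G s p) t = (ut G (t, p), vt G (t, p)) := by
  have h := deriv_slice_left (F := JJ G) (JJ_diff hGsm) t p
  have h2 : (fun s => G s p) = fun s => JJ G (s, p) := rfl
  rw [h2, h]
  exact Prod.ext (fderiv_JJ_fst hGsm _ _) (fderiv_JJ_snd hGsm _ _)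

lemma pdx_G_fst (t : ℝ) (p : ℝ × ℝ) :
    pdx (fun p' => (G t p').1) p = ux G (t, p) :=
  fderiv_slice_right (F := uu G) ((uu_smooth G hGsm).differentiable (by simp)) t p (1, 0)

lemma pdy_G_fst (t : ℝ) (p : ℝ × ℝ) :
    pdy (fun p' => (G t p').1) p = uy G (t, p) :=
  fderiv_slice_right (F := uu G) ((uu_smooth G hGsm).differentiable (by simp)) t p (0, 1)

lemma pdx_G_snd (t : ℝ) (p : ℝ × ℝ) :
    pdx (fun p' => (G t p').2) p = vx G (t, p) :=
  fderiv_slice_right (F := vv G) ((vv_smooth G hGsm).differentiable (by simp)) t p (1, 0)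

lemma pdy_G_snd (t : ℝ) (p : ℝ × ℝ) :
    pdy (fun p' => (G t p').2) p = vy G (t, p) :=
  fderiv_slice_right (F := vv G) ((vv_smooth G hGsm).differentiable (by simp)) t p (0, 1)

variable (hfsm : ContDiff ℝ (⊤ : ℕ∞) fun q : ℝ × (ℝ × ℝ) => f q.1 q.2)

include hfsm

omit hGsm in
lemma pdx_ff (t : ℝ) (y : ℝ × ℝ) :
    fderiv ℝ (fun x : ℝ × (ℝ × ℝ) => f x.1 x.2) (t, y) ((0 : ℝ), ((1:ℝ), (0:ℝ))) =
      pdx (f t) y :=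
  (fderiv_slice_right (F := fun x : ℝ × (ℝ × ℝ) => f x.1 x.2)
    (hfsm.differentiable (by simp)) t y (1, 0)).symm

omit hGsm in
lemma pdy_ff (t : ℝ) (y : ℝ × ℝ) :
    fderiv ℝ (fun x : ℝ × (ℝ × ℝ) => f x.1 x.2) (t, y) ((0 : ℝ), ((0:ℝ), (1:ℝ))) =
      pdy (f t) y :=
  (fderiv_slice_right (F := fun x : ℝ × (ℝ × ℝ) => f x.1 x.2)
    (hfsm.differentiable (by simp)) t y (0, 1)).symm

omit hfsm in
lemma hasFDerivAt_Psi (q : ℝ × (ℝ × ℝ)) :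
    HasFDerivAt (fun x : ℝ × (ℝ × ℝ) => ((x.1, JJ G x) : ℝ × (ℝ × ℝ)))
      ((ContinuousLinearMap.fst ℝ ℝ (ℝ × ℝ)).prod (fderiv ℝ (JJ G) q)) q :=
  HasFDerivAt.prodMk ((ContinuousLinearMap.fst ℝ ℝ (ℝ × ℝ)).hasFDerivAt) (JJ_diff hGsm q).hasFDerivAt

lemma fderiv_fC (q : ℝ × (ℝ × ℝ)) (w : ℝ × ℝ) :
    fderiv ℝ (fun x : ℝ × (ℝ × ℝ) => f x.1 (G x.1 x.2)) q ((0 : ℝ), w) =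
      pdx (f q.1) (JJ G q) * fderiv ℝ (uu G) q (0, w) +
      pdy (f q.1) (JJ G q) * fderiv ℝ (vv G) q (0, w) := by
  have hff : HasFDerivAt (fun x : ℝ × (ℝ × ℝ) => f x.1 x.2)
      (fderiv ℝ (fun x : ℝ × (ℝ × ℝ) => f x.1 x.2) (q.1, JJ G q)) (q.1, JJ G q) :=
    (hfsm.differentiable (by simp) _).hasFDerivAt
  have hcomp := hff.comp q (hasFDerivAt_Psi hGsm q)
  have h1 : fderiv ℝ (fun x : ℝ × (ℝ × ℝ) => f x.1 (G x.1 x.2)) q ((0 : ℝ), w) =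
      fderiv ℝ (fun x : ℝ × (ℝ × ℝ) => f x.1 x.2) (q.1, JJ G q)
        ((0 : ℝ), fderiv ℝ (JJ G) q (0, w)) := by
    have h0 : (fun x : ℝ × (ℝ × ℝ) => f x.1 (G x.1 x.2)) =
        (fun x : ℝ × (ℝ × ℝ) => f x.1 x.2) ∘ (fun x : ℝ × (ℝ × ℝ) => (x.1, JJ G x)) := rfl
    rw [h0, hcomp.fderiv]; rfl
  rw [h1]
  set v : ℝ × ℝ := fderiv ℝ (JJ G) q (0, w) with hv
  have hdec : ((0 : ℝ), v) = v.1 • ((0 : ℝ), ((1:ℝ), (0:ℝ))) +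
      v.2 • ((0 : ℝ), ((0:ℝ), (1:ℝ))) := by
    simp [Prod.ext_iff]
  rw [hdec, map_add, ContinuousLinearMap.map_smul, ContinuousLinearMap.map_smul,
    pdx_ff hfsm, pdy_ff hfsm, smul_eq_mul, smul_eq_mul, hv,
    ← fderiv_JJ_fst hGsm, ← fderiv_JJ_snd hGsm]
  ring

lemma key_pointwise
    (hpde : ∀ t ∈ Icc (0:ℝ) 1, ∀ p ∈ disk,
      pdx (f t) (G t p) = -(deriv (fun s => G s p) t).2 ∧
      pdy (f t) (G t p) = (deriv (fun s => G s p) t).1)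
    {t : ℝ} (ht : t ∈ Icc (0:ℝ) 1) {p : ℝ × ℝ} (hp : p ∈ disk) :
    fderiv ℝ (Itg G) (t, p) EV1 =
      2 * (p.1 * fderiv ℝ (HH G f) (t, p) EVx + p.2 * fderiv ℝ (HH G f) (t, p) EVy) := by
  obtain ⟨hpdx, hpdy⟩ := hpde t ht p hp
  rw [deriv_G_slice hGsm] at hpdx hpdy
  dsimp only at hpdx hpdy
  have hud : DifferentiableAt ℝ (uu G) (t, p) :=
    ((uu_smooth G hGsm).differentiable (by simp)) _
  have hvd : DifferentiableAt ℝ (vv G) (t, p) :=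
    ((vv_smooth G hGsm).differentiable (by simp)) _
  have huxd : DifferentiableAt ℝ (ux G) (t, p) :=
    ((ux_smooth G hGsm).differentiable (by simp)) _
  have huyd : DifferentiableAt ℝ (uy G) (t, p) :=
    ((uy_smooth G hGsm).differentiable (by simp)) _
  have hutd : DifferentiableAt ℝ (ut G) (t, p) :=
    ((ut_smooth G hGsm).differentiable (by simp)) _
  have hvxd : DifferentiableAt ℝ (vx G) (t, p) :=
    ((vx_smooth G hGsm).differentiable (by simp)) _
  have hvyd : DifferentiableAt ℝ (vy G) (t, p) :=
    ((vy_smooth G hGsm).differentiable (by simp)) _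
  have hvtd : DifferentiableAt ℝ (vt G) (t, p) :=
    ((vt_smooth G hGsm).differentiable (by simp)) _
  have hcxd : DifferentiableAt ℝ (fun x : ℝ × (ℝ × ℝ) => x.2.1) (t, p) :=
    (differentiable_fst.comp differentiable_snd).differentiableAt
  have hcyd : DifferentiableAt ℝ (fun x : ℝ × (ℝ × ℝ) => x.2.2) (t, p) :=
    (differentiable_snd.comp differentiable_snd).differentiableAt
  have hfCd : DifferentiableAt ℝ (fun x : ℝ × (ℝ × ℝ) => f x.1 (G x.1 x.2)) (t, p) :=
    ((hfsm.comp (contDiff_fst.prodMk hGsm)).differentiable (by simp)) _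
  have hAd : DifferentiableAt ℝ (fun x => uu G x * vx G x - vv G x * ux G x) (t, p) :=
    (hud.mul hvxd).sub (hvd.mul huxd)
  have hBd : DifferentiableAt ℝ (fun x => uu G x * vy G x - vv G x * uy G x) (t, p) :=
    (hud.mul hvyd).sub (hvd.mul huyd)
  have hCd : DifferentiableAt ℝ (fun x => uu G x * vt G x - vv G x * ut G x) (t, p) :=
    (hud.mul hvtd).sub (hvd.mul hutd)
  -- rfl lemmas
  have rut : fderiv ℝ (uu G) (t, p) EV1 = ut G (t, p) := rfl
  have rvt : fderiv ℝ (vv G) (t, p) EV1 = vt G (t, p) := rfl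
  have rux : fderiv ℝ (uu G) (t, p) EVx = ux G (t, p) := rfl
  have rvx : fderiv ℝ (vv G) (t, p) EVx = vx G (t, p) := rfl
  have ruy : fderiv ℝ (uu G) (t, p) EVy = uy G (t, p) := rfl
  have rvy : fderiv ℝ (vv G) (t, p) EVy = vy G (t, p) := rfl
  -- Schwarz symmetry
  have sxu : fderiv ℝ (ux G) (t, p) EV1 = fderiv ℝ (ut G) (t, p) EVx :=
    fderiv_fderiv_symm (uu_smooth G hGsm) (t, p) EVx EV1
  have syu : fderiv ℝ (uy G) (t, p) EV1 = fderiv ℝ (ut G) (t, p) EVy :=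
    fderiv_fderiv_symm (uu_smooth G hGsm) (t, p) EVy EV1
  have sxv : fderiv ℝ (vx G) (t, p) EV1 = fderiv ℝ (vt G) (t, p) EVx :=
    fderiv_fderiv_symm (vv_smooth G hGsm) (t, p) EVx EV1
  have syv : fderiv ℝ (vy G) (t, p) EV1 = fderiv ℝ (vt G) (t, p) EVy :=
    fderiv_fderiv_symm (vv_smooth G hGsm) (t, p) EVy EV1
  -- LHS expansion
  have hL : fderiv ℝ (Itg G) (t, p) EV1 =
      p.1 * (uu G (t, p) * fderiv ℝ (vt G) (t, p) EVx + vx G (t, p) * ut G (t, p) -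
        (vv G (t, p) * fderiv ℝ (ut G) (t, p) EVx + ux G (t, p) * vt G (t, p))) +
      p.2 * (uu G (t, p) * fderiv ℝ (vt G) (t, p) EVy + vy G (t, p) * ut G (t, p) -
        (vv G (t, p) * fderiv ℝ (ut G) (t, p) EVy + uy G (t, p) * vt G (t, p))) := by
    show fderiv ℝ (fun x : ℝ × (ℝ × ℝ) =>
        x.2.1 * (uu G x * vx G x - vv G x * ux G x) +
        x.2.2 * (uu G x * vy G x - vv G x * uy G x)) (t, p) EV1 = _
    rw [fderiv_add_apply' (hcxd.fun_mul hAd) (hcyd.fun_mul hBd),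
        fderiv_mul_apply' hcxd hAd, fderiv_mul_apply' hcyd hBd,
        fderiv_coord_x, fderiv_coord_y,
        fderiv_sub_apply' (hud.fun_mul hvxd) (hvd.fun_mul huxd),
        fderiv_mul_apply' hud hvxd, fderiv_mul_apply' hvd huxd,
        fderiv_sub_apply' (hud.fun_mul hvyd) (hvd.fun_mul huyd),
        fderiv_mul_apply' hud hvyd, fderiv_mul_apply' hvd huyd,
        rut, rvt, sxu, syu, sxv, syv]
    dsimp only [EV1]
    ring
  -- RHS x-part
  have hfCx : fderiv ℝ (fun x : ℝ × (ℝ × ℝ) => f x.1 (G x.1 x.2)) (t, p) EVx =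
      -(vt G (t, p)) * ux G (t, p) + ut G (t, p) * vx G (t, p) := by
    have h := fderiv_fC hGsm hfsm (t, p) ((1:ℝ), (0:ℝ))
    have e0 : (((0:ℝ), ((1:ℝ), (0:ℝ))) : ℝ × (ℝ × ℝ)) = EVx := rfl
    rw [e0] at h
    have e1 : pdx (f ((t, p) : ℝ × (ℝ × ℝ)).1) (JJ G (t, p)) = pdx (f t) (G t p) := rfl
    have e2 : pdy (f ((t, p) : ℝ × (ℝ × ℝ)).1) (JJ G (t, p)) = pdy (f t) (G t p) := rfl
    rw [e1, e2, hpdx, hpdy, rux, rvx] at h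
    exact h
  have hfCy : fderiv ℝ (fun x : ℝ × (ℝ × ℝ) => f x.1 (G x.1 x.2)) (t, p) EVy =
      -(vt G (t, p)) * uy G (t, p) + ut G (t, p) * vy G (t, p) := by
    have h := fderiv_fC hGsm hfsm (t, p) ((0:ℝ), (1:ℝ))
    have e0 : (((0:ℝ), ((0:ℝ), (1:ℝ))) : ℝ × (ℝ × ℝ)) = EVy := rfl
    rw [e0] at h
    have e1 : pdx (f ((t, p) : ℝ × (ℝ × ℝ)).1) (JJ G (t, p)) = pdx (f t) (G t p) := rfl
    have e2 : pdy (f ((t, p) : ℝ × (ℝ × ℝ)).1) (JJ G (t, p)) = pdy (f t) (G t p) := rfl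
    rw [e1, e2, hpdx, hpdy, ruy, rvy] at h
    exact h
  have hRx : fderiv ℝ (HH G f) (t, p) EVx =
      (1 / 2) * (uu G (t, p) * fderiv ℝ (vt G) (t, p) EVx + vt G (t, p) * ux G (t, p) -
        (vv G (t, p) * fderiv ℝ (ut G) (t, p) EVx + ut G (t, p) * vx G (t, p))) +
      (-(vt G (t, p)) * ux G (t, p) + ut G (t, p) * vx G (t, p)) := by
    show fderiv ℝ (fun x : ℝ × (ℝ × ℝ) =>
        (1 / 2) * (uu G x * vt G x - vv G x * ut G x) + f x.1 (G x.1 x.2)) (t, p) EVx = _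
    rw [fderiv_add_apply' (hCd.const_mul _) hfCd,
        fderiv_const_mul_apply' hCd,
        fderiv_sub_apply' (hud.fun_mul hvtd) (hvd.fun_mul hutd),
        fderiv_mul_apply' hud hvtd, fderiv_mul_apply' hvd hutd,
        rux, rvx, hfCx]
  have hRy : fderiv ℝ (HH G f) (t, p) EVy =
      (1 / 2) * (uu G (t, p) * fderiv ℝ (vt G) (t, p) EVy + vt G (t, p) * uy G (t, p) -
        (vv G (t, p) * fderiv ℝ (ut G) (t, p) EVy + ut G (t, p) * vy G (t, p))) +
      (-(vt G (t, p)) * uy G (t, p) + ut G (t, p) * vy G (t, p)) := by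
    show fderiv ℝ (fun x : ℝ × (ℝ × ℝ) =>
        (1 / 2) * (uu G x * vt G x - vv G x * ut G x) + f x.1 (G x.1 x.2)) (t, p) EVy = _
    rw [fderiv_add_apply' (hCd.const_mul _) hfCd,
        fderiv_const_mul_apply' hCd,
        fderiv_sub_apply' (hud.fun_mul hvtd) (hvd.fun_mul hutd),
        fderiv_mul_apply' hud hvtd, fderiv_mul_apply' hvd hutd,
        ruy, rvy, hfCy]
  rw [hL, hRx, hRy]
  ring

end isotopy2

lemma convex_disk : Convex ℝ disk := by
  intro x hx y hy a b ha hb hab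
  simp only [disk, mem_setOf_eq] at *
  have h1 : (a • x + b • y).1 = a * x.1 + b * y.1 := rfl
  have h2 : (a • x + b • y).2 = a * x.2 + b * y.2 := rfl
  rw [h1, h2]
  have hxy : 2 * (x.1 * y.1 + x.2 * y.2) ≤ 2 := by
    nlinarith [sq_nonneg (x.1 - y.1), sq_nonneg (x.2 - y.2)]
  have e1 : a ^ 2 * (x.1 ^ 2 + x.2 ^ 2) ≤ a ^ 2 := by nlinarith [sq_nonneg a]
  have e2 : b ^ 2 * (y.1 ^ 2 + y.2 ^ 2) ≤ b ^ 2 := by nlinarith [sq_nonneg b]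
  have e3 : 2 * (a * b) * (x.1 * y.1 + x.2 * y.2) ≤ 2 * (a * b) := by
    nlinarith [mul_nonneg ha hb]
  have e4 : a ^ 2 + 2 * (a * b) + b ^ 2 = 1 := by nlinarith [hab]
  nlinarith [e1, e2, e3, e4]

lemma frontier_disk_null : volume (frontier disk) = 0 :=
  convex_disk.addHaar_frontier volume

lemma disk_integral_eq_of_interior {h : ℝ × ℝ → ℝ} (h0 : ∀ p ∈ interior disk, h p = 0) :
    ∫ p in disk, h p = 0 := by
  have hae : ∀ᵐ p ∂(volume.restrict disk), h p = 0 := by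
    have h1 : ∀ᵐ p ∂(volume.restrict disk), p ∉ frontier disk := by
      apply ae_restrict_of_ae
      rw [ae_iff]
      simpa using frontier_disk_null
    have h2 : ∀ᵐ p ∂(volume.restrict disk), p ∈ disk :=
      ae_restrict_mem measurableSet_disk
    filter_upwards [h1, h2] with p hp1 hp2
    apply h0
    have hcl : closure disk = disk :=
      (isClosed_Iic.preimage (by continuity :
        Continuous fun p : ℝ × ℝ => p.1 ^ 2 + p.2 ^ 2)).closure_eq
    have : p ∈ closure disk := by rw [hcl]; exact hp2
    rw [← hcl] at hp2
    by_contra hni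
    exact hp1 ⟨this, hni⟩
  calc ∫ p in disk, h p = ∫ _p in disk, (0:ℝ) := integral_congr_ae hae
    _ = 0 := integral_zero _ _

lemma det_fderiv_eq_jacDet {g : ℝ × ℝ → ℝ × ℝ} (hg : Differentiable ℝ g) (p : ℝ × ℝ) :
    (fderiv ℝ g p).det = jacDet g p := by
  rw [clm_det_eq]
  have h1 : pdx (fun q => (g q).1) p = (fderiv ℝ g p (1, 0)).1 := by
    rw [pdx, ((hg p).hasFDerivAt.fst).fderiv]; rfl
  have h2 : pdy (fun q => (g q).1) p = (fderiv ℝ g p (0, 1)).1 := by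
    rw [pdy, ((hg p).hasFDerivAt.fst).fderiv]; rfl
  have h3 : pdx (fun q => (g q).2) p = (fderiv ℝ g p (1, 0)).2 := by
    rw [pdx, ((hg p).hasFDerivAt.snd).fderiv]; rfl
  have h4 : pdy (fun q => (g q).2) p = (fderiv ℝ g p (0, 1)).2 := by
    rw [pdy, ((hg p).hasFDerivAt.snd).fderiv]; rfl
  rw [jacDet, h1, h2, h3, h4]

lemma symp_comp_integral {g : ℝ × ℝ → ℝ × ℝ} (hg : IsSymp g) (k : ℝ × ℝ → ℝ) :
    ∫ p in disk, k (g p) = ∫ p in disk, k p := by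
  obtain ⟨hsm, hmaps, hjac, g', hg'sm, hg'maps, hleft, hright⟩ := hg
  have hdiff : Differentiable ℝ g := hsm.differentiable (by simp)
  have hinj : InjOn g disk := fun a ha b hb h => by
    rw [← hleft a ha, h, hleft b hb]
  have himg : g '' disk = disk := by
    apply subset_antisymm (image_subset_iff.mpr hmaps)
    intro p hp
    exact ⟨g' p, hg'maps hp, hright p hp⟩
  have hder : ∀ x ∈ disk, HasFDerivWithinAt g (fderiv ℝ g x) disk x :=
    fun x _ => (hdiff x).hasFDerivAt.hasFDerivWithinAt
  have h := integral_image_eq_integral_abs_det_fderiv_smul volume measurableSet_disk hder hinj k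
  rw [himg] at h
  rw [h]
  apply setIntegral_congr_fun measurableSet_disk
  intro x hx
  have hdet : (fderiv ℝ g x).det = 1 := by
    rw [det_fderiv_eq_jacDet hdiff]; exact hjac x hx
  simp [hdet]

lemma isCompact_disk : IsCompact disk := by
  have hsub : disk ⊆ Icc (-1 : ℝ) 1 ×ˢ Icc (-1 : ℝ) 1 := by
    intro p hp
    simp only [disk, mem_setOf_eq] at hp
    constructor <;> constructor <;> nlinarith [sq_nonneg p.1, sq_nonneg p.2]
  exact (isCompact_Icc.prod isCompact_Icc).of_isClosed_subset
    (isClosed_Iic.preimage (by continuity : Continuous fun p : ℝ × ℝ => p.1 ^ 2 + p.2 ^ 2)) hsub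

lemma integrableOn_disk_of_continuous {h : ℝ × ℝ → ℝ} (hc : Continuous h) :
    IntegrableOn h disk :=
  hc.continuousOn.integrableOn_compact isCompact_disk

section assembly

variable {G : ℝ → ℝ × ℝ → ℝ × ℝ} {f : ℝ → ℝ × ℝ → ℝ} {φ : ℝ → ℝ → ℝ}
variable (hGsm : ContDiff ℝ (⊤ : ℕ∞) fun q : ℝ × (ℝ × ℝ) => G q.1 q.2)
variable (hfsm : ContDiff ℝ (⊤ : ℕ∞) fun q : ℝ × (ℝ × ℝ) => f q.1 q.2)

include hGsm hfsm

omit hGsm in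
lemma ft_smooth' (t : ℝ) : ContDiff ℝ (⊤ : ℕ∞) (f t) :=
  hfsm.comp (contDiff_const.prodMk contDiff_id)

lemma HHt_smooth (t : ℝ) : ContDiff ℝ (⊤ : ℕ∞) (fun p : ℝ × ℝ => HH G f (t, p)) :=
  (HH_smooth G f hGsm hfsm).comp (contDiff_const.prodMk contDiff_id)

lemma HH_integral_eq
    (hpde : ∀ t ∈ Icc (0:ℝ) 1, ∀ p ∈ disk,
      pdx (f t) (G t p) = -(deriv (fun s => G s p) t).2 ∧
      pdy (f t) (G t p) = (deriv (fun s => G s p) t).1)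
    (hf0 : ∀ t ∈ Icc (0:ℝ) 1, ∀ p ∈ bdry, f t p = 0)
    {t : ℝ} (ht : t ∈ Icc (0:ℝ) 1) (hsymp : IsSymp (G t)) :
    ∫ p in disk, HH G f (t, p) = 2 * ∫ p in disk, f t p := by
  set K : ℝ × ℝ → ℝ := fun y =>
    -(1 / 2) * (y.1 * pdx (f t) y + y.2 * pdy (f t) y) + f t y with hK
  have hstep1 : ∫ p in disk, HH G f (t, p) = ∫ p in disk, K (G t p) := by
    apply setIntegral_congr_fun measurableSet_disk
    intro p hp
    obtain ⟨h1, h2⟩ := hpde t ht p hp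
    rw [deriv_G_slice hGsm] at h1 h2
    dsimp only at h1 h2
    show HH G f (t, p) = _
    rw [hK]
    show _ = -(1 / 2) * ((G t p).1 * pdx (f t) (G t p) + (G t p).2 * pdy (f t) (G t p)) +
      f t (G t p)
    rw [h1, h2, HH]
    show (1 / 2) * ((G t p).1 * vt G (t, p) - (G t p).2 * ut G (t, p)) + f t (G t p) = _
    ring
  rw [hstep1, symp_comp_integral hsymp K]
  have hKsplit : ∫ p in disk, K p =
      -(1 / 2) * (∫ p in disk, (p.1 * pdx (f t) p + p.2 * pdy (f t) p)) +
        ∫ p in disk, f t p := by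
    rw [hK]
    have hia : IntegrableOn (fun p : ℝ × ℝ =>
        -(1 / 2) * (p.1 * pdx (f t) p + p.2 * pdy (f t) p)) disk := by
      apply integrableOn_disk_of_continuous
      have h1 := continuous_pdx (ft_smooth' hfsm t)
      have h2 := continuous_pdy (ft_smooth' hfsm t)
      fun_prop
    have hib : IntegrableOn (f t) disk :=
      integrableOn_disk_of_continuous (ft_smooth' hfsm t).continuous
    rw [integral_add hia hib, integral_const_mul]
  rw [hKsplit, radial_div (f t) (ft_smooth' hfsm t)]
  have hbd : ∫ θ in (0:ℝ)..(2 * π), f t (Real.cos θ, Real.sin θ) = 0 := by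
    have : ∀ θ : ℝ, f t (Real.cos θ, Real.sin θ) = 0 := fun θ =>
      hf0 t ht _ (by simp [bdry, Real.cos_sq_add_sin_sq])
    simp [this]
  rw [hbd]
  ring

end assembly

section assembly2

variable {G : ℝ → ℝ × ℝ → ℝ × ℝ} {f : ℝ → ℝ × ℝ → ℝ} {φ : ℝ → ℝ → ℝ}
variable (hGsm : ContDiff ℝ (⊤ : ℕ∞) fun q : ℝ × (ℝ × ℝ) => G q.1 q.2)
variable (hfsm : ContDiff ℝ (⊤ : ℕ∞) fun q : ℝ × (ℝ × ℝ) => f q.1 q.2)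
variable (hφsm : ContDiff ℝ (⊤ : ℕ∞) fun q : ℝ × ℝ => φ q.1 q.2)

include hGsm hfsm hφsm

omit hGsm hfsm in
lemma hasDerivAt_phi_slice (t θ : ℝ) :
    HasDerivAt (fun s => φ s θ) (fderiv ℝ (fun q : ℝ × ℝ => φ q.1 q.2) (t, θ) (1, 0)) t :=
  hasDerivAt_slice_left (F := fun q : ℝ × ℝ => φ q.1 q.2) (hφsm.differentiable (by simp)) t θ

lemma HH_boundary
    (hlift : ∀ t ∈ Icc (0:ℝ) 1, ∀ θ : ℝ,
      G t (Real.cos θ, Real.sin θ) = (Real.cos (φ t θ), Real.sin (φ t θ)))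
    (hf0 : ∀ t ∈ Icc (0:ℝ) 1, ∀ p ∈ bdry, f t p = 0)
    {t : ℝ} (ht : t ∈ Ioo (0:ℝ) 1) (θ : ℝ) :
    HH G f (t, (Real.cos θ, Real.sin θ)) = (1 / 2) * deriv (fun s => φ s θ) t := by
  have htI : t ∈ Icc (0:ℝ) 1 := Ioo_subset_Icc_self ht
  have hψ : HasDerivAt (fun s => φ s θ) (deriv (fun s => φ s θ) t) t := by
    have h := hasDerivAt_phi_slice hφsm t θ
    rwa [← h.deriv] at h
  set ψ' := deriv (fun s => φ s θ) t
  have hGb : deriv (fun s => G s (Real.cos θ, Real.sin θ)) t =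
      (-Real.sin (φ t θ) * ψ', Real.cos (φ t θ) * ψ') := by
    have hEv : (fun s => G s (Real.cos θ, Real.sin θ)) =ᶠ[𝓝 t]
        fun s => ((Real.cos (φ s θ), Real.sin (φ s θ)) : ℝ × ℝ) := by
      filter_upwards [Ioo_mem_nhds ht.1 ht.2] with s hs
      exact hlift s (Ioo_subset_Icc_self hs) θ
    rw [hEv.deriv_eq]
    exact (HasDerivAt.prodMk (hψ.cos) (hψ.sin)).deriv
  have hpair := deriv_G_slice hGsm t ((Real.cos θ, Real.sin θ) : ℝ × ℝ)
  rw [hGb] at hpair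
  have hut : ut G (t, (Real.cos θ, Real.sin θ)) = -Real.sin (φ t θ) * ψ' :=
    (congrArg Prod.fst hpair).symm
  have hvt : vt G (t, (Real.cos θ, Real.sin θ)) = Real.cos (φ t θ) * ψ' :=
    (congrArg Prod.snd hpair).symm
  have huu : uu G (t, (Real.cos θ, Real.sin θ)) = Real.cos (φ t θ) := by
    show (G t (Real.cos θ, Real.sin θ)).1 = _
    rw [hlift t htI θ]
  have hvv : vv G (t, (Real.cos θ, Real.sin θ)) = Real.sin (φ t θ) := by
    show (G t (Real.cos θ, Real.sin θ)).2 = _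
    rw [hlift t htI θ]
  have hf00 : f t (G t (Real.cos θ, Real.sin θ)) = 0 := by
    rw [hlift t htI θ]
    exact hf0 t htI _ (by simp [bdry, Real.cos_sq_add_sin_sq])
  show (1 / 2) * (uu G _ * vt G _ - vv G _ * ut G _) + f t (G t _) = _
  rw [hut, hvt, huu, hvv, hf00]
  have hcs := Real.sin_sq_add_cos_sq (φ t θ)
  linear_combination (deriv (fun s => φ s θ) t / 2) * hcs

lemma inner_eval
    (hpde : ∀ t ∈ Icc (0:ℝ) 1, ∀ p ∈ disk,
      pdx (f t) (G t p) = -(deriv (fun s => G s p) t).2 ∧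
      pdy (f t) (G t p) = (deriv (fun s => G s p) t).1)
    (hf0 : ∀ t ∈ Icc (0:ℝ) 1, ∀ p ∈ bdry, f t p = 0)
    (hlift : ∀ t ∈ Icc (0:ℝ) 1, ∀ θ : ℝ,
      G t (Real.cos θ, Real.sin θ) = (Real.cos (φ t θ), Real.sin (φ t θ)))
    {t : ℝ} (ht : t ∈ Ioo (0:ℝ) 1) (hsymp : IsSymp (G t)) :
    ∫ p in disk, fderiv ℝ (Itg G) (t, p) EV1 =
      (∫ θ in (0:ℝ)..(2 * π), deriv (fun s => φ s θ) t) - 8 * ∫ p in disk, f t p := by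
  have htI : t ∈ Icc (0:ℝ) 1 := Ioo_subset_Icc_self ht
  have hslx : ∀ p : ℝ × ℝ, pdx (fun p' => HH G f (t, p')) p = fderiv ℝ (HH G f) (t, p) EVx :=
    fun p => fderiv_slice_right (F := HH G f)
      ((HH_smooth G f hGsm hfsm).differentiable (by simp)) t p (1, 0)
  have hsly : ∀ p : ℝ × ℝ, pdy (fun p' => HH G f (t, p')) p = fderiv ℝ (HH G f) (t, p) EVy :=
    fun p => fderiv_slice_right (F := HH G f)
      ((HH_smooth G f hGsm hfsm).differentiable (by simp)) t p (0, 1)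
  have hstep1 : ∫ p in disk, fderiv ℝ (Itg G) (t, p) EV1 =
      ∫ p in disk, 2 * (p.1 * pdx (fun p' => HH G f (t, p')) p +
        p.2 * pdy (fun p' => HH G f (t, p')) p) := by
    apply setIntegral_congr_fun measurableSet_disk
    intro p hp
    show fderiv ℝ (Itg G) (t, p) EV1 = 2 * (p.1 * pdx (fun p' => HH G f (t, p')) p +
      p.2 * pdy (fun p' => HH G f (t, p')) p)
    rw [key_pointwise hGsm hfsm hpde htI hp, hslx p, hsly p]
  rw [hstep1, integral_const_mul, radial_div _ (HHt_smooth hGsm hfsm t)]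
  have hbdint : ∫ θ in (0:ℝ)..(2 * π), HH G f (t, (Real.cos θ, Real.sin θ)) =
      (1 / 2) * ∫ θ in (0:ℝ)..(2 * π), deriv (fun s => φ s θ) t := by
    rw [← intervalIntegral.integral_const_mul]
    apply intervalIntegral.integral_congr
    intro θ _
    exact HH_boundary hGsm hfsm hφsm hlift hf0 ht θ
  rw [hbdint, HH_integral_eq hGsm hfsm hpde hf0 htI hsymp]
  ring

end assembly2


/-- for a smooth isotopy `(g_t)` in `Symp(D)` with `g_0 = id`,
normalized Hamiltonians `f_t` vanishing on `∂D`,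
`R((g_t)) = ∫₀¹ ∫_D f_t dxdy dt`, and the lift `φ̃` of the boundary isotopy
with `φ̃_0 = id`, one has
`τ_λ(g₁) + 2 R((g_t)) = (1/4) ∫₀^{2π} (φ̃₁(θ) - θ) dθ`. -/
theorem tau_add_two_R_eq_boundary_integral
    (G : ℝ → ℝ × ℝ → ℝ × ℝ) (f : ℝ → ℝ × ℝ → ℝ) (φ : ℝ → ℝ → ℝ)
    (hG : IsIsotopy G) (hf : IsHam G f)
    (hf0 : ∀ t ∈ Icc (0:ℝ) 1, ∀ p ∈ bdry, f t p = 0)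
    (hφ : IsBoundaryLift G φ) :
    tauL (G 1) + 2 * (∫ t in (0:ℝ)..1, ∫ p in disk, f t p) =
      (1 / 4) * ∫ θ in (0:ℝ)..(2 * π), (φ 1 θ - θ) := by
  obtain ⟨hGsm, hsymp, hG0⟩ := hG
  obtain ⟨hfsm, hpde⟩ := hf
  obtain ⟨hφsm, _hmono, hφ0, hlift⟩ := hφ
  have h2pi : (0:ℝ) ≤ 2 * π := by linarith [Real.pi_pos]
  have hItgC : Continuous (Itg G) := (Itg_smooth G hGsm).continuous
  have hFdC : Continuous (fun q : ℝ × (ℝ × ℝ) => fderiv ℝ (Itg G) q EV1) :=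
    (contDiff_fderiv_apply (Itg_smooth G hGsm) EV1).continuous
  have hffC : Continuous (fun q : ℝ × (ℝ × ℝ) => f q.1 q.2) := hfsm.continuous
  have hdΦC : Continuous (fun q : ℝ × ℝ => fderiv ℝ (fun w : ℝ × ℝ => φ w.1 w.2) q (1, 0)) :=
    (contDiff_fderiv_apply hφsm ((1:ℝ), (0:ℝ))).continuous
  -- Step 1 : tauL in terms of Itg
  have hstep1 : tauL (G 1) = (1 / 4) * ∫ p in disk, Itg G (1, p) := by
    unfold tauL
    congr 1
    apply setIntegral_congr_fun measurableSet_disk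
    intro p hp
    show p.1 * ((G 1 p).1 * pdx (fun q => (G 1 q).2) p - (G 1 p).2 * pdx (fun q => (G 1 q).1) p) +
      p.2 * ((G 1 p).1 * pdy (fun q => (G 1 q).2) p - (G 1 p).2 * pdy (fun q => (G 1 q).1) p) =
      Itg G (1, p)
    rw [pdx_G_snd hGsm, pdx_G_fst hGsm, pdy_G_snd hGsm, pdy_G_fst hGsm]
    rfl
  -- Step 2 : Itg at time 0 integrates to 0
  have hI0 : ∫ p in disk, Itg G (0, p) = 0 := by
    apply disk_integral_eq_of_interior
    intro p hp
    have huu0 : uu G (0, p) = p.1 := by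
      show (G 0 p).1 = p.1
      rw [hG0 p (interior_subset hp)]
    have hvv0 : vv G (0, p) = p.2 := by
      show (G 0 p).2 = p.2
      rw [hG0 p (interior_subset hp)]
    have hEv1 : (fun p' => (G 0 p').1) =ᶠ[𝓝 p] fun p' : ℝ × ℝ => p'.1 := by
      filter_upwards [isOpen_interior.mem_nhds hp] with x hx
      rw [hG0 x (interior_subset hx)]
    have hEv2 : (fun p' => (G 0 p').2) =ᶠ[𝓝 p] fun p' : ℝ × ℝ => p'.2 := by
      filter_upwards [isOpen_interior.mem_nhds hp] with x hx
      rw [hG0 x (interior_subset hx)]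
    have hfst : fderiv ℝ (fun p' : ℝ × ℝ => p'.1) p = ContinuousLinearMap.fst ℝ ℝ ℝ :=
      (ContinuousLinearMap.fst ℝ ℝ ℝ).hasFDerivAt.fderiv
    have hsnd : fderiv ℝ (fun p' : ℝ × ℝ => p'.2) p = ContinuousLinearMap.snd ℝ ℝ ℝ :=
      (ContinuousLinearMap.snd ℝ ℝ ℝ).hasFDerivAt.fderiv
    have hux0 : ux G (0, p) = 1 := by
      rw [← pdx_G_fst hGsm, pdx, hEv1.fderiv_eq, hfst]; rfl
    have huy0 : uy G (0, p) = 0 := by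
      rw [← pdy_G_fst hGsm, pdy, hEv1.fderiv_eq, hfst]; rfl
    have hvx0 : vx G (0, p) = 0 := by
      rw [← pdx_G_snd hGsm, pdx, hEv2.fderiv_eq, hsnd]; rfl
    have hvy0 : vy G (0, p) = 1 := by
      rw [← pdy_G_snd hGsm, pdy, hEv2.fderiv_eq, hsnd]; rfl
    show p.1 * (uu G (0, p) * vx G (0, p) - vv G (0, p) * ux G (0, p)) +
      p.2 * (uu G (0, p) * vy G (0, p) - vv G (0, p) * uy G (0, p)) = 0
    rw [huu0, hvv0, hux0, huy0, hvx0, hvy0]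
    ring
  -- Step 3 : FTC in t pointwise, then Fubini
  have hFTCp : ∀ p : ℝ × ℝ, Itg G (1, p) - Itg G (0, p) =
      ∫ t in Ioc (0:ℝ) 1, fderiv ℝ (Itg G) (t, p) EV1 := by
    intro p
    have hEV : ∀ t : ℝ, fderiv ℝ (Itg G) (t, p) ((1:ℝ), ((0:ℝ), (0:ℝ))) =
        fderiv ℝ (Itg G) (t, p) EV1 := fun t => rfl
    have hD : ∀ t ∈ uIcc (0:ℝ) 1, HasDerivAt (fun s => Itg G (s, p))
        (fderiv ℝ (Itg G) (t, p) EV1) t := by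
      intro t _
      exact hasDerivAt_slice_left (F := Itg G) ((Itg_smooth G hGsm).differentiable (by simp)) t p
    have hcont : Continuous fun t : ℝ => fderiv ℝ (Itg G) (t, p) EV1 :=
      hFdC.comp (continuous_id.prodMk continuous_const)
    have h := intervalIntegral.integral_eq_sub_of_hasDerivAt hD (hcont.intervalIntegrable 0 1)
    rw [intervalIntegral.integral_of_le zero_le_one] at h
    exact h.symm
  have hint1 : IntegrableOn (fun p => Itg G (1, p)) disk :=
    integrableOn_disk_of_continuous (hItgC.comp (continuous_const.prodMk continuous_id))
  have hint0 : IntegrableOn (fun p => Itg G (0, p)) disk :=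
    integrableOn_disk_of_continuous (hItgC.comp (continuous_const.prodMk continuous_id))
  have hIjoint : Integrable (uncurry fun (p : ℝ × ℝ) (t : ℝ) => fderiv ℝ (Itg G) (t, p) EV1)
      ((volume.restrict disk).prod (volume.restrict (Ioc (0:ℝ) 1))) := by
    rw [Measure.prod_restrict]
    have hc : Continuous fun z : (ℝ × ℝ) × ℝ => fderiv ℝ (Itg G) (z.2, z.1) EV1 :=
      hFdC.comp (continuous_snd.prodMk continuous_fst)
    exact (hc.continuousOn.integrableOn_compact (isCompact_disk.prod isCompact_Icc)).mono_set
      (prod_mono subset_rfl Ioc_subset_Icc_self)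
  have hstep3 : ∫ p in disk, Itg G (1, p) =
      ∫ t in Ioc (0:ℝ) 1, ∫ p in disk, fderiv ℝ (Itg G) (t, p) EV1 := by
    have h1 : ∫ p in disk, Itg G (1, p) = ∫ p in disk, (Itg G (1, p) - Itg G (0, p)) := by
      rw [integral_sub hint1 hint0, hI0, sub_zero]
    rw [h1,
      setIntegral_congr_fun measurableSet_disk (fun p _ => hFTCp p)]
    exact integral_integral_swap hIjoint
  -- Step 4 : evaluate the inner integral a.e.
  have haeIoo : ∀ᵐ t ∂(volume.restrict (Ioc (0:ℝ) 1)), t ∈ Ioo (0:ℝ) 1 := by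
    have h1 : ∀ᵐ t ∂(volume.restrict (Ioc (0:ℝ) 1)), t ∈ Ioc (0:ℝ) 1 :=
      ae_restrict_mem measurableSet_Ioc
    have h2 : ∀ᵐ t ∂(volume.restrict (Ioc (0:ℝ) 1)), t ≠ 1 := by
      apply ae_restrict_of_ae
      rw [ae_iff]
      have : {t : ℝ | ¬ t ≠ 1} = {1} := by ext t; simp
      rw [this]
      exact Real.volume_singleton
    filter_upwards [h1, h2] with t ht1 ht2
    exact ⟨ht1.1, lt_of_le_of_ne ht1.2 ht2⟩
  have hstep4 : ∫ t in Ioc (0:ℝ) 1, ∫ p in disk, fderiv ℝ (Itg G) (t, p) EV1 =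
      ∫ t in Ioc (0:ℝ) 1,
        ((∫ θ in (0:ℝ)..(2 * π), deriv (fun s => φ s θ) t) - 8 * ∫ p in disk, f t p) := by
    apply integral_congr_ae
    filter_upwards [haeIoo] with t ht
    exact inner_eval hGsm hfsm hφsm hpde hf0 hlift ht (hsymp t (Ioo_subset_Icc_self ht))
  -- integrability of the two pieces
  have hBjoint : Integrable (uncurry fun (t : ℝ) (p : ℝ × ℝ) => f t p)
      ((volume.restrict (Ioc (0:ℝ) 1)).prod (volume.restrict disk)) := by
    rw [Measure.prod_restrict]
    exact (hffC.continuousOn.integrableOn_compact (isCompact_Icc.prod isCompact_disk)).mono_set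
      (prod_mono Ioc_subset_Icc_self subset_rfl)
  have hBint : IntegrableOn (fun t => ∫ p in disk, f t p) (Ioc (0:ℝ) 1) :=
    hBjoint.integral_prod_left
  have hderivφ : ∀ t θ : ℝ, deriv (fun s => φ s θ) t =
      fderiv ℝ (fun w : ℝ × ℝ => φ w.1 w.2) (t, θ) (1, 0) :=
    fun t θ => (hasDerivAt_phi_slice hφsm t θ).deriv
  have hAjoint : Integrable
      (uncurry fun (t θ : ℝ) => fderiv ℝ (fun w : ℝ × ℝ => φ w.1 w.2) (t, θ) (1, 0))
      ((volume.restrict (Ioc (0:ℝ) 1)).prod (volume.restrict (Ioc (0:ℝ) (2 * π)))) := by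
    rw [Measure.prod_restrict]
    exact (hdΦC.continuousOn.integrableOn_compact (isCompact_Icc.prod isCompact_Icc)).mono_set
      (prod_mono Ioc_subset_Icc_self Ioc_subset_Icc_self)
  have hAeq : ∀ t : ℝ, (∫ θ in (0:ℝ)..(2 * π), deriv (fun s => φ s θ) t) =
      ∫ θ in Ioc (0:ℝ) (2 * π), fderiv ℝ (fun w : ℝ × ℝ => φ w.1 w.2) (t, θ) (1, 0) := by
    intro t
    rw [intervalIntegral.integral_of_le h2pi]
    exact setIntegral_congr_fun measurableSet_Ioc (fun θ _ => hderivφ t θ)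
  have hAint : IntegrableOn (fun t => ∫ θ in (0:ℝ)..(2 * π), deriv (fun s => φ s θ) t)
      (Ioc (0:ℝ) 1) := by
    have h := hAjoint.integral_prod_left
    apply h.congr
    filter_upwards with t
    exact (hAeq t).symm
  -- Step 5 : split and integrate the φ term by Fubini + FTC
  have hstep5 : ∫ t in Ioc (0:ℝ) 1,
      ((∫ θ in (0:ℝ)..(2 * π), deriv (fun s => φ s θ) t) - 8 * ∫ p in disk, f t p) =
      (∫ θ in (0:ℝ)..(2 * π), (φ 1 θ - θ)) - 8 * ∫ t in (0:ℝ)..1, ∫ p in disk, f t p := by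
    rw [integral_sub hAint (hBint.const_mul 8), integral_const_mul,
      intervalIntegral.integral_of_le zero_le_one]
    congr 1
    have h1 : ∫ t in Ioc (0:ℝ) 1, (∫ θ in (0:ℝ)..(2 * π), deriv (fun s => φ s θ) t) =
        ∫ t in Ioc (0:ℝ) 1, ∫ θ in Ioc (0:ℝ) (2 * π),
          fderiv ℝ (fun w : ℝ × ℝ => φ w.1 w.2) (t, θ) (1, 0) :=
      setIntegral_congr_fun measurableSet_Ioc (fun t _ => hAeq t)
    rw [h1, integral_integral_swap hAjoint]
    have h2 : ∀ θ : ℝ, (∫ t in Ioc (0:ℝ) 1,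
        fderiv ℝ (fun w : ℝ × ℝ => φ w.1 w.2) (t, θ) (1, 0)) = φ 1 θ - θ := by
      intro θ
      have hD : ∀ t ∈ uIcc (0:ℝ) 1, HasDerivAt (fun s => φ s θ)
          (fderiv ℝ (fun w : ℝ × ℝ => φ w.1 w.2) (t, θ) (1, 0)) t :=
        fun t _ => hasDerivAt_phi_slice hφsm t θ
      have hcont : Continuous fun t : ℝ =>
          fderiv ℝ (fun w : ℝ × ℝ => φ w.1 w.2) (t, θ) (1, 0) :=
        hdΦC.comp (continuous_id.prodMk continuous_const)
      have h := intervalIntegral.integral_eq_sub_of_hasDerivAt hD (hcont.intervalIntegrable 0 1)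
      rw [intervalIntegral.integral_of_le zero_le_one, hφ0 θ] at h
      exact h
    rw [setIntegral_congr_fun measurableSet_Ioc (fun θ _ => h2 θ),
      intervalIntegral.integral_of_le h2pi]
  rw [hstep1, hstep3, hstep4, hstep5]
  ring
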